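/- Let a, b, c, d be real numbers with ad − bc = 1 and b > 0, let f ∈ L¹(ℝ) ∩ L²(ℝ) with F^{(a,b,c,d)} ∈ L¹(ℝ), and set g(t) = e^{i a t²/(2b)} f(t). Then for every z in the upper half-plane, 2 ∫₀^∞ K^{(d,−b,−c,a)}(z, ω) F^{(a,b,c,d)}(ω) dω = 2 e^{−i a z²/(2b)} ∫₀^∞ K^{(0,−1,1,0)}(z, ω) G^{(0,1,−1,0)}(ω) dω, where K^{(0,−1,1,0)}(z, ω) = (1/√(−2πi)) e^{izω} and G^{(0,1,−1,0)}(ω) = (1/√(2πi)) ∫_ℝ e^{−iωt} g(t) dt. -/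

import Mathlib

open MeasureTheory Complex Filter Topology

/-- The LCT kernel `K^{(a,b,c,d)}(ω, x)` on the real line. -/
noncomputable def lctKernel (a b c d : ℝ) (ω x : ℝ) : ℂ :=
  ((2 * Real.pi * Complex.I * b) ^ ((2 : ℂ)⁻¹))⁻¹ *
    Complex.exp (Complex.I *
      ((d * ω ^ 2 / (2 * b) - ω * x / b + a * x ^ 2 / (2 * b) : ℝ) : ℂ))

/-- The linear canonical transform of `f` with parameters `(a,b,c,d)`. -/
noncomputable def lct (a b c d : ℝ) (f : ℝ → ℂ) (ω : ℝ) : ℂ :=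
  ∫ x : ℝ, lctKernel a b c d ω x * f x

/-- The kernel `K^{(d,−b,−c,a)}(z, ω)` with complex first argument. -/
noncomputable def lctKernelInv (a b c d : ℝ) (z : ℂ) (ω : ℝ) : ℂ :=
  ((-2 * Real.pi * Complex.I * b) ^ ((2 : ℂ)⁻¹))⁻¹ *
    Complex.exp (Complex.I *
      (-(a : ℂ) * z ^ 2 / (2 * (b : ℂ)) + z * (ω : ℂ) / (b : ℂ) -
        (d : ℂ) * (ω : ℂ) ^ 2 / (2 * (b : ℂ))))

/-
Writing `ω = b u`, the kernel `K^{(d,−b,−c,a)}(z, ω)` times the LCT kernel `K^{(a,b,c,d)}(ω, x)`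
is, up to the factor `b⁻¹ e^{−i a z²/(2b)}`, the kernel `e^{i z u}` times the Fourier kernel
`e^{−i u x}` times the chirp `e^{i a x²/(2b)}`: the quadratic terms in `ω` cancel, and the
principal square roots of `±2πi b` are conjugate, so multiply to `2π b`.
Integrating in `x` and substituting `ω = b u` on `(0, ∞)` gives the identity, the Jacobian `b`
cancelling `b⁻¹`.
-/

lemma ofReal_mul_I_cpow_inv_two_mul_neg {x : ℝ} (hx : 0 < x) :
    ((x : ℂ) * I) ^ (2⁻¹ : ℂ) * (-((x : ℂ) * I)) ^ (2⁻¹ : ℂ) = x := by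
  have hI : (x : ℂ) * I ≠ 0 := mul_ne_zero (ofReal_ne_zero.mpr hx.ne') I_ne_zero
  rw [cpow_def_of_ne_zero hI, cpow_def_of_ne_zero (neg_ne_zero.mpr hI), ← exp_add, ← add_mul,
    log_ofReal_mul hx I_ne_zero, neg_mul_eq_mul_neg, log_ofReal_mul hx (neg_ne_zero.mpr I_ne_zero),
    log_I, log_neg_I]
  rw [show ((Real.log x : ℂ) + Real.pi / 2 * I + ((Real.log x : ℂ) + -(Real.pi / 2) * I)) * 2⁻¹
      = (Real.log x : ℂ) by ring, ← ofReal_exp, Real.exp_log hx]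

lemma lct_normalization_mul {b : ℝ} (hb : 0 < b) :
    ((-2 * Real.pi * I * b) ^ (2⁻¹ : ℂ))⁻¹ * ((2 * Real.pi * I * b) ^ (2⁻¹ : ℂ))⁻¹
      = ((2 * Real.pi * b : ℝ) : ℂ)⁻¹ := by
  rw [← mul_inv, mul_comm,
    ← ofReal_mul_I_cpow_inv_two_mul_neg (by positivity : 0 < 2 * Real.pi * b)]
  push_cast
  ring_nf

lemma lctKernelInv_mul_lctKernel {a b : ℝ} (hb : 0 < b) (c d : ℝ) (z : ℂ) (ω x : ℝ) :
    lctKernelInv a b c d z ω * lctKernel a b c d ω x =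
      (b : ℂ)⁻¹ * exp (-I * a * z ^ 2 / (2 * b)) *
        (((-2 * Real.pi * I) ^ (2⁻¹ : ℂ))⁻¹ * exp (I * z * (b⁻¹ * ω : ℝ))) *
          (lctKernel 0 1 (-1) 0 (b⁻¹ * ω) x * exp (I * ((a * x ^ 2 / (2 * b) : ℝ) : ℂ))) := by
  have hbC : (b : ℂ) ≠ 0 := ofReal_ne_zero.mpr hb.ne'
  have hnorm := lct_normalization_mul hb
  have hnorm₁ := lct_normalization_mul one_pos
  simp only [lctKernelInv, lctKernel]
  push_cast at hnorm hnorm₁ ⊢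
  simp only [mul_one, zero_mul, zero_div, div_one, add_zero, zero_sub] at hnorm₁ ⊢
  have hexp : exp (I * (-a * z ^ 2 / (2 * b) + z * ω / b - d * ω ^ 2 / (2 * b))) *
        exp (I * (d * ω ^ 2 / (2 * b) - ω * x / b + a * x ^ 2 / (2 * b))) =
      exp (-I * a * z ^ 2 / (2 * b)) * exp (I * z * ((b : ℂ)⁻¹ * ω)) *
        (exp (I * -((b : ℂ)⁻¹ * ω * x)) * exp (I * (a * x ^ 2 / (2 * b)))) := by
    simp only [← exp_add]
    congr 1
    field_simp
    ring
  rw [mul_mul_mul_comm, hnorm, hexp]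
  linear_combination (-(b : ℂ)⁻¹ * exp (-I * a * z ^ 2 / (2 * b)) * exp (I * z * ((b : ℂ)⁻¹ * ω)) *
    (exp (I * -((b : ℂ)⁻¹ * ω * x)) * exp (I * (a * x ^ 2 / (2 * b))))) * hnorm₁

lemma lctKernelInv_mul_lct {a b : ℝ} (hb : 0 < b) (c d : ℝ) (f : ℝ → ℂ) (z : ℂ) (ω : ℝ) :
    lctKernelInv a b c d z ω * lct a b c d f ω =
      (b : ℂ)⁻¹ * exp (-I * a * z ^ 2 / (2 * b)) *
        ((((-2 * Real.pi * I) ^ (2⁻¹ : ℂ))⁻¹ * exp (I * z * (b⁻¹ * ω : ℝ))) *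
          lct 0 1 (-1) 0 (fun t ↦ exp (I * ((a * t ^ 2 / (2 * b) : ℝ) : ℂ)) * f t) (b⁻¹ * ω)) := by
  simp only [lct, ← integral_const_mul]
  congr 1 with x
  rw [← mul_assoc, lctKernelInv_mul_lctKernel hb]
  ring

theorem generalized_analytic_signal_chirp_repr_general
    (a b c d : ℝ) (hb : 0 < b)
    (f : ℝ → ℂ)
    (g : ℝ → ℂ)
    (hg : ∀ t : ℝ, g t = Complex.exp (Complex.I * ((a * t ^ 2 / (2 * b) : ℝ) : ℂ)) * f t) :
    ∀ z : ℂ, 0 < z.im →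
      2 * ∫ ω in Set.Ioi (0 : ℝ), lctKernelInv a b c d z ω * lct a b c d f ω =
        2 * Complex.exp (-(Complex.I) * (a : ℂ) * z ^ 2 / (2 * (b : ℂ))) *
          ∫ ω in Set.Ioi (0 : ℝ),
            (((-2 * Real.pi * Complex.I) ^ ((2 : ℂ)⁻¹))⁻¹ *
              Complex.exp (Complex.I * z * (ω : ℂ))) * lct 0 1 (-1) 0 g ω := by
  intro z _
  obtain rfl : g = _ := funext hg
  simp only [lctKernelInv_mul_lct hb, integral_const_mul]
  rw [integral_comp_mul_left_Ioi (fun u ↦ ((-2 * Real.pi * I) ^ (2⁻¹ : ℂ))⁻¹ * exp (I * z * u) *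
      lct 0 1 (-1) 0 _ u) 0 (inv_pos.mpr hb), mul_zero, inv_inv, real_smul]
  have hbC : (b : ℂ) ≠ 0 := ofReal_ne_zero.mpr hb.ne'
  field_simp

/-- the generalized analytic signal equals a chirp times a
Fourier-type analytic extension of `g`. -/
theorem generalized_analytic_signal_chirp_repr
    (a b c d : ℝ) (hb : 0 < b) (habcd : a * d - b * c = 1)
    (f : ℝ → ℂ) (hf1 : Integrable f) (hf2 : MemLp f 2)
    (hF : Integrable (lct a b c d f))
    (g : ℝ → ℂ)
    (hg : ∀ t : ℝ, g t = Complex.exp (Complex.I * ((a * t ^ 2 / (2 * b) : ℝ) : ℂ)) * f t) :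
    ∀ z : ℂ, 0 < z.im →
      2 * ∫ ω in Set.Ioi (0 : ℝ), lctKernelInv a b c d z ω * lct a b c d f ω =
        2 * Complex.exp (-(Complex.I) * (a : ℂ) * z ^ 2 / (2 * (b : ℂ))) *
          ∫ ω in Set.Ioi (0 : ℝ),
            (((-2 * Real.pi * Complex.I) ^ ((2 : ℂ)⁻¹))⁻¹ *
              Complex.exp (Complex.I * z * (ω : ℂ))) * lct 0 1 (-1) 0 g ω :=
  generalized_analytic_signal_chirp_repr_general a b c d hb f g hg
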